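/- arXiv:2005.11426 — 4 statements merged into one kernel-verified Lean document; each statement's English description precedes it below -/
import Mathlib

section
/- Fix α ∈ (0, 1), W₀ > 0, and let W_i = W₀/α^i for i ∈ ℤ. For any i ∈ ℤ, any h > 0 and any offsets x, y ∈ ℝ, the two boxes b₁ = (W_i, h, x, y) and b₂ = (W_{i+1}, h, x, y), whose widths are two adjacent width-cell centers, satisfy IoU(b₁, b₂) = α. -/
/-
Boxes with a common center and with w₁ ≤ w₂, h₁ ≤ h₂ are nested, so their intersection is the
smaller box and their union the larger one: the IoU is the ratio of the areas. Adjacent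
width-cell centers satisfy W_i = α W_{i+1} with α < 1, so for equal heights that ratio is α.
-/

/-- Intersection area of two axis-aligned boxes given as (w, h, x, y):
the rectangle [x - w/2, x + w/2] × [y - h/2, y + h/2]. -/
noncomputable def interArea (w₁ h₁ x₁ y₁ w₂ h₂ x₂ y₂ : ℝ) : ℝ :=
  max 0 (min (x₁ + w₁ / 2) (x₂ + w₂ / 2) - max (x₁ - w₁ / 2) (x₂ - w₂ / 2)) *
    max 0 (min (y₁ + h₁ / 2) (y₂ + h₂ / 2) - max (y₁ - h₁ / 2) (y₂ - h₂ / 2))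

/-- Intersection over union of two axis-aligned boxes. -/
noncomputable def iou (w₁ h₁ x₁ y₁ w₂ h₂ x₂ y₂ : ℝ) : ℝ :=
  interArea w₁ h₁ x₁ y₁ w₂ h₂ x₂ y₂ /
    (w₁ * h₁ + w₂ * h₂ - interArea w₁ h₁ x₁ y₁ w₂ h₂ x₂ y₂)

lemma overlap_length_concentric (x a b : ℝ) :
    min (x + a / 2) (x + b / 2) - max (x - a / 2) (x - b / 2) = min a b := by
  rcases le_total a b with hab | hab
  · rw [min_eq_left (by linarith), max_eq_left (by linarith), min_eq_left hab]
    ring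
  · rw [min_eq_right (by linarith), max_eq_right (by linarith), min_eq_right hab]
    ring

lemma interArea_concentric {w₁ h₁ w₂ h₂ : ℝ} (x y : ℝ) (hw₁ : 0 ≤ w₁) (hw₂ : 0 ≤ w₂)
    (hh₁ : 0 ≤ h₁) (hh₂ : 0 ≤ h₂) :
    interArea w₁ h₁ x y w₂ h₂ x y = min w₁ w₂ * min h₁ h₂ := by
  rw [interArea, overlap_length_concentric, overlap_length_concentric,
    max_eq_right (le_min hw₁ hw₂), max_eq_right (le_min hh₁ hh₂)]

lemma iou_of_concentric_nested {w₁ h₁ w₂ h₂ : ℝ} (x y : ℝ) (hw₁ : 0 ≤ w₁) (hh₁ : 0 ≤ h₁)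
    (hw : w₁ ≤ w₂) (hh : h₁ ≤ h₂) :
    iou w₁ h₁ x y w₂ h₂ x y = w₁ * h₁ / (w₂ * h₂) := by
  rw [iou, interArea_concentric x y hw₁ (hw₁.trans hw) hh₁ (hh₁.trans hh), min_eq_left hw,
    min_eq_left hh, add_sub_cancel_left]

lemma div_zpow_eq_mul_div_zpow_add_one {α : ℝ} (hα : α ≠ 0) (W₀ : ℝ) (i : ℤ) :
    W₀ / α ^ i = α * (W₀ / α ^ (i + 1)) := by
  rw [zpow_add_one₀ hα]
  field_simp

theorem stmt_2 (α W₀ : ℝ) (hα : α ∈ Set.Ioo (0 : ℝ) 1) (hW₀ : 0 < W₀)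
    (i : ℤ) (h x y : ℝ) (hh : 0 < h) :
    iou (W₀ / α ^ i) h x y (W₀ / α ^ (i + 1)) h x y = α := by
  obtain ⟨hα₀, hα₁⟩ := hα
  set w := W₀ / α ^ (i + 1)
  have hw : 0 < w := div_pos hW₀ (zpow_pos hα₀ _)
  rw [div_zpow_eq_mul_div_zpow_add_one hα₀.ne', iou_of_concentric_nested x y
    (by positivity) hh.le (mul_le_of_le_one_left hw.le hα₁.le) le_rfl]
  field_simp
end

section
/- Fix α ∈ (0, 1) and W > 0. Let b₁ = (w₁, h, x, y) and b₂ = (w₂, h, x, y) be two boxes with the same height h > 0 and the same offsets (x, y), whose widths satisfy √α·W ≤ w₁ ≤ W/√α and √α·W ≤ w₂ ≤ W/√α (i.e., both widths lie in the same width cell with center W). Then IoU(b₁, b₂) ≥ α, and this bound is attained when {w₁, w₂} = {√α·W, W/√α}. -/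
lemma overlap_of_same_center (c a b : ℝ) (ha : 0 ≤ a) (hb : 0 ≤ b) :
    max 0 (min (c + a / 2) (c + b / 2) - max (c - a / 2) (c - b / 2)) = min a b := by
  rcases le_total a b with hab | hab
  · rw [min_eq_left (show c + a / 2 ≤ c + b / 2 by linarith),
      max_eq_left (show c - b / 2 ≤ c - a / 2 by linarith), min_eq_left hab,
      show c + a / 2 - (c - a / 2) = a by ring, max_eq_right ha]
  · rw [min_eq_right (show c + b / 2 ≤ c + a / 2 by linarith),
      max_eq_right (show c - a / 2 ≤ c - b / 2 by linarith), min_eq_right hab,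
      show c + b / 2 - (c - b / 2) = b by ring, max_eq_right hb]

lemma interArea_of_same_center (w₁ h₁ w₂ h₂ x y : ℝ) (hw₁ : 0 ≤ w₁) (hh₁ : 0 ≤ h₁)
    (hw₂ : 0 ≤ w₂) (hh₂ : 0 ≤ h₂) :
    interArea w₁ h₁ x y w₂ h₂ x y = min w₁ w₂ * min h₁ h₂ := by
  rw [interArea, overlap_of_same_center x w₁ w₂ hw₁ hw₂, overlap_of_same_center y h₁ h₂ hh₁ hh₂]

lemma iou_of_same_center_of_same_height (w₁ w₂ h x y : ℝ) (hw₁ : 0 ≤ w₁) (hw₂ : 0 ≤ w₂)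
    (hh : 0 < h) :
    iou w₁ h x y w₂ h x y = min w₁ w₂ / max w₁ w₂ := by
  have hunion : w₁ * h + w₂ * h - min w₁ w₂ * h = max w₁ w₂ * h := by
    linear_combination -h * min_add_max w₁ w₂
  rw [iou, interArea_of_same_center w₁ h w₂ h x y hw₁ hh.le hw₂ hh.le, min_self, hunion,
    mul_div_mul_right _ _ hh.ne']

lemma div_le_min_div_max {m M w₁ w₂ : ℝ} (hm : 0 < m) (h₁ : w₁ ∈ Set.Icc m M)
    (h₂ : w₂ ∈ Set.Icc m M) :
    m / M ≤ min w₁ w₂ / max w₁ w₂ :=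
  div_le_div₀ (hm.le.trans (le_min h₁.1 h₂.1)) (le_min h₁.1 h₂.1)
    (hm.trans_le (h₁.1.trans (le_max_left _ _))) (max_le h₁.2 h₂.2)

lemma sqrt_mul_div_div_sqrt {α : ℝ} (hα : 0 < α) {W : ℝ} (hW : W ≠ 0) :
    Real.sqrt α * W / (W / Real.sqrt α) = α := by
  have hs : Real.sqrt α ≠ 0 := (Real.sqrt_pos.mpr hα).ne'
  field_simp
  exact Real.sq_sqrt hα.le

theorem stmt_3 (α W : ℝ) (hα : α ∈ Set.Ioo (0 : ℝ) 1) (hW : 0 < W)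
    (w₁ w₂ h x y : ℝ) (hh : 0 < h)
    (hw₁l : Real.sqrt α * W ≤ w₁) (hw₁u : w₁ ≤ W / Real.sqrt α)
    (hw₂l : Real.sqrt α * W ≤ w₂) (hw₂u : w₂ ≤ W / Real.sqrt α) :
    α ≤ iou w₁ h x y w₂ h x y ∧
      iou (Real.sqrt α * W) h x y (W / Real.sqrt α) h x y = α := by
  have hlo : 0 < Real.sqrt α * W := mul_pos (Real.sqrt_pos.mpr hα.1) hW
  have hcell : Real.sqrt α * W ≤ W / Real.sqrt α := hw₁l.trans hw₁u
  have hratio := sqrt_mul_div_div_sqrt hα.1 hW.ne'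
  constructor
  · rw [iou_of_same_center_of_same_height _ _ _ _ _ (hlo.le.trans hw₁l) (hlo.le.trans hw₂l) hh,
      ← hratio]
    exact div_le_min_div_max hlo ⟨hw₁l, hw₁u⟩ ⟨hw₂l, hw₂u⟩
  · rw [iou_of_same_center_of_same_height _ _ _ _ _ hlo.le (hlo.le.trans hcell) hh,
      min_eq_left hcell, max_eq_right hcell, hratio]
end

section
/- Fix α ∈ (0, 1) and W > 0, and set δ = W(1 − α)/(1 + α). Then (W − δ)/(W + δ) = α, and consequently any two boxes b₁ = (W, h, x₁, y) and b₂ = (W, h, x₂, y) with equal width W, equal height h > 0, equal vertical offset y, and horizontal offsets at adjacent partition centers (i.e., |x₁ − x₂| = δ) satisfy IoU(b₁, b₂) = α. -/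
lemma overlap_of_eq_length (w a b : ℝ) :
    min (a + w / 2) (b + w / 2) - max (a - w / 2) (b - w / 2) = w - |a - b| := by
  rw [min_add_add_right, max_sub_sub_right, ← max_sub_min_eq_abs']
  ring

lemma interArea_of_eq_size (w h x₁ y₁ x₂ y₂ : ℝ) :
    interArea w h x₁ y₁ w h x₂ y₂ = max 0 (w - |x₁ - x₂|) * max 0 (h - |y₁ - y₂|) := by
  rw [interArea, overlap_of_eq_length, overlap_of_eq_length]

lemma iou_of_horizontal_shift {w h : ℝ} (x₁ x₂ y : ℝ) (hh : 0 < h) (hx : |x₁ - x₂| ≤ w) :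
    iou w h x₁ y w h x₂ y = (w - |x₁ - x₂|) / (w + |x₁ - x₂|) := by
  rw [iou, interArea_of_eq_size, sub_self, abs_zero, sub_zero, max_eq_right hh.le,
    max_eq_right (sub_nonneg.mpr hx)]
  have hunion : w * h + w * h - (w - |x₁ - x₂|) * h = (w + |x₁ - x₂|) * h := by ring
  rw [hunion, mul_div_mul_right _ _ hh.ne']

lemma sub_div_add_partition_offset {α W : ℝ} (hW : W ≠ 0) (hα : 1 + α ≠ 0) :
    (W - W * (1 - α) / (1 + α)) / (W + W * (1 - α) / (1 + α)) = α := by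
  field_simp
  ring

lemma partition_offset_le {α W : ℝ} (hα : 0 ≤ α) (hW : 0 ≤ W) :
    W * (1 - α) / (1 + α) ≤ W := by
  rw [div_le_iff₀ (by linarith)]
  nlinarith

theorem stmt_4 (α W : ℝ) (hα : α ∈ Set.Ioo (0 : ℝ) 1) (hW : 0 < W) :
    (W - W * (1 - α) / (1 + α)) / (W + W * (1 - α) / (1 + α)) = α ∧
    ∀ h x₁ x₂ y : ℝ, 0 < h → |x₁ - x₂| = W * (1 - α) / (1 + α) →
      iou W h x₁ y W h x₂ y = α := by
  have hratio := sub_div_add_partition_offset hW.ne' (by linarith [hα.1] : 1 + α ≠ 0)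
  refine ⟨hratio, fun h x₁ x₂ y hh hx => ?_⟩
  rw [iou_of_horizontal_shift x₁ x₂ y hh (hx ▸ partition_offset_le hα.1.le hW.le), hx, hratio]
end

section
/- Let α ∈ (0, 1) satisfy (1 − α)/(1 + α) < √α, and fix IoUHash parameters W₀ > 0, H₀ > 0, b_x, b_y ∈ ℝ. If two axis-aligned boxes b₁ = (w₁, h₁, x₁, y₁) and b₂ = (w₂, h₂, x₂, y₂) are hashed by IoUHash to the same code (i, j, m, n) ∈ ℤ⁴, then their intersection area is strictly positive, and hence IoU(b₁, b₂) > 0. -/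
/-- The width (or height) cell index: i = ⌊(log W₀ − log w)/log α⌉,
where ⌊·⌉ is nearest-integer rounding with ⌊t⌉ = k iff k − 1/2 ≤ t < k + 1/2,
which is Mathlib's `round`. -/
noncomputable def widthIdx (α W₀ w : ℝ) : ℤ :=
  round ((Real.log W₀ - Real.log w) / Real.log α)

/-- The i-th cell center W_i = W₀ / α^i. -/
noncomputable def cellCenter (α W₀ : ℝ) (i : ℤ) : ℝ := W₀ / α ^ i

/-- The offset partition spacing δ_i = W_i (1 − α)/(1 + α). -/
noncomputable def cellDelta (α W₀ : ℝ) (i : ℤ) : ℝ :=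
  cellCenter α W₀ i * ((1 - α) / (1 + α))

/-- The offset cell index: m = ⌊x/δ_i − b_x⌉ where i is the width cell index of w. -/
noncomputable def offsetIdx (α W₀ bX w x : ℝ) : ℤ :=
  round (x / cellDelta α W₀ (widthIdx α W₀ w) - bX)

/-- IoUHash: maps a box (w, h, x, y) to the code (i, j, m, n) ∈ ℤ⁴. -/
noncomputable def iouHash (α W₀ H₀ bX bY w h x y : ℝ) : ℤ × ℤ × ℤ × ℤ :=
  (widthIdx α W₀ w, widthIdx α H₀ h, offsetIdx α W₀ bX w x, offsetIdx α H₀ bY h y)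

theorem abs_sub_lt_one_of_round_eq {K : Type*} [Field K] [LinearOrder K]
    [IsStrictOrderedRing K] [FloorRing K] {s t : K} (h : round s = round t) :
    |s - t| < 1 := by
  rw [round_eq, round_eq] at h
  simpa using Int.abs_sub_lt_one_of_floor_eq_floor h

section Overlap

variable {w₁ h₁ x₁ y₁ w₂ h₂ x₂ y₂ : ℝ}

theorem overlap_pos_of_abs_sub_lt (hw₁ : 0 < w₁) (hw₂ : 0 < w₂)
    (hx : |x₁ - x₂| < (w₁ + w₂) / 2) :
    0 < min (x₁ + w₁ / 2) (x₂ + w₂ / 2) - max (x₁ - w₁ / 2) (x₂ - w₂ / 2) := by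
  obtain ⟨hlt, hgt⟩ := abs_lt.mp hx
  rw [sub_pos]
  exact max_lt (lt_min (by linarith) (by linarith)) (lt_min (by linarith) (by linarith))

theorem overlap_le (hw₁ : 0 ≤ w₁) :
    max 0 (min (x₁ + w₁ / 2) (x₂ + w₂ / 2) - max (x₁ - w₁ / 2) (x₂ - w₂ / 2)) ≤ w₁ := by
  have hmin := min_le_left (x₁ + w₁ / 2) (x₂ + w₂ / 2)
  have hmax := le_max_left (x₁ - w₁ / 2) (x₂ - w₂ / 2)
  exact max_le hw₁ (by linarith)

theorem interArea_pos (hw₁ : 0 < w₁) (hh₁ : 0 < h₁) (hw₂ : 0 < w₂) (hh₂ : 0 < h₂)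
    (hx : |x₁ - x₂| < (w₁ + w₂) / 2) (hy : |y₁ - y₂| < (h₁ + h₂) / 2) :
    0 < interArea w₁ h₁ x₁ y₁ w₂ h₂ x₂ y₂ :=
  mul_pos (lt_max_of_lt_right (overlap_pos_of_abs_sub_lt hw₁ hw₂ hx))
    (lt_max_of_lt_right (overlap_pos_of_abs_sub_lt hh₁ hh₂ hy))

theorem interArea_le_mul (hw₁ : 0 ≤ w₁) (hh₁ : 0 ≤ h₁) :
    interArea w₁ h₁ x₁ y₁ w₂ h₂ x₂ y₂ ≤ w₁ * h₁ :=
  mul_le_mul (overlap_le hw₁) (overlap_le hh₁) (le_max_left _ _) hw₁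

theorem iou_pos (hw₁ : 0 ≤ w₁) (hh₁ : 0 ≤ h₁) (hwh₂ : 0 < w₂ * h₂)
    (hI : 0 < interArea w₁ h₁ x₁ y₁ w₂ h₂ x₂ y₂) :
    0 < iou w₁ h₁ x₁ y₁ w₂ h₂ x₂ y₂ := by
  have hle : interArea w₁ h₁ x₁ y₁ w₂ h₂ x₂ y₂ ≤ w₁ * h₁ := interArea_le_mul hw₁ hh₁
  exact div_pos hI (by linarith)

end Overlap

section Hash

variable {α W₀ : ℝ}

theorem cellCenter_pos (hα : 0 < α) (hW₀ : 0 < W₀) (i : ℤ) : 0 < cellCenter α W₀ i :=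
  div_pos hW₀ (zpow_pos hα i)

theorem cellDelta_pos (hα : α ∈ Set.Ioo (0 : ℝ) 1) (hW₀ : 0 < W₀) (i : ℤ) :
    0 < cellDelta α W₀ i :=
  mul_pos (cellCenter_pos hα.1 hW₀ i) (div_pos (by linarith [hα.2]) (by linarith [hα.1]))

theorem cellCenter_mul_sqrt_le (hα : α ∈ Set.Ioo (0 : ℝ) 1) (hW₀ : 0 < W₀) {w : ℝ}
    (hw : 0 < w) : cellCenter α W₀ (widthIdx α W₀ w) * Real.sqrt α ≤ w := by
  set t := (Real.log W₀ - Real.log w) / Real.log α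
  set i := widthIdx α W₀ w
  have hlogα : Real.log α < 0 := Real.log_neg hα.1 hα.2
  have hround : |t - i| ≤ 1 / 2 := abs_sub_round t
  have hti : (i : ℝ) - 1 / 2 ≤ t := by linarith [(abs_le.mp hround).1]
  have ht : t * Real.log α = Real.log W₀ - Real.log w := div_mul_cancel₀ _ hlogα.ne
  have hlog : Real.log (cellCenter α W₀ i * Real.sqrt α) ≤ Real.log w := by
    rw [Real.log_mul (cellCenter_pos hα.1 hW₀ i).ne' (Real.sqrt_pos.mpr hα.1).ne', cellCenter,
      Real.log_div hW₀.ne' (zpow_pos hα.1 i).ne', Real.log_zpow, Real.log_sqrt hα.1.le]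
    linarith [mul_le_mul_of_nonpos_right hti hlogα.le]
  have hpos : 0 < cellCenter α W₀ i * Real.sqrt α :=
    mul_pos (cellCenter_pos hα.1 hW₀ i) (Real.sqrt_pos.mpr hα.1)
  exact (Real.log_le_log_iff hpos hw).mp hlog

theorem cellDelta_lt (hα : α ∈ Set.Ioo (0 : ℝ) 1) (hcond : (1 - α) / (1 + α) < Real.sqrt α)
    (hW₀ : 0 < W₀) {w : ℝ} (hw : 0 < w) : cellDelta α W₀ (widthIdx α W₀ w) < w :=
  calc cellDelta α W₀ (widthIdx α W₀ w)
      < cellCenter α W₀ (widthIdx α W₀ w) * Real.sqrt α :=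
        mul_lt_mul_of_pos_left hcond (cellCenter_pos hα.1 hW₀ _)
    _ ≤ w := cellCenter_mul_sqrt_le hα hW₀ hw

theorem abs_sub_lt_cellDelta (hα : α ∈ Set.Ioo (0 : ℝ) 1) (hW₀ : 0 < W₀)
    {bX w₁ x₁ w₂ x₂ : ℝ} (hi : widthIdx α W₀ w₁ = widthIdx α W₀ w₂)
    (hm : offsetIdx α W₀ bX w₁ x₁ = offsetIdx α W₀ bX w₂ x₂) :
    |x₁ - x₂| < cellDelta α W₀ (widthIdx α W₀ w₁) := by
  set δ := cellDelta α W₀ (widthIdx α W₀ w₁)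
  have hδ : 0 < δ := cellDelta_pos hα hW₀ _
  rw [offsetIdx, offsetIdx, ← hi] at hm
  have h := abs_sub_lt_one_of_round_eq hm
  rwa [sub_sub_sub_cancel_right, ← sub_div, abs_div, abs_of_pos hδ, div_lt_one hδ] at h

theorem abs_sub_lt_half_add_of_idx_eq (hα : α ∈ Set.Ioo (0 : ℝ) 1)
    (hcond : (1 - α) / (1 + α) < Real.sqrt α) (hW₀ : 0 < W₀)
    {bX w₁ x₁ w₂ x₂ : ℝ} (hw₁ : 0 < w₁) (hw₂ : 0 < w₂)
    (hi : widthIdx α W₀ w₁ = widthIdx α W₀ w₂)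
    (hm : offsetIdx α W₀ bX w₁ x₁ = offsetIdx α W₀ bX w₂ x₂) :
    |x₁ - x₂| < (w₁ + w₂) / 2 := by
  have h₁ := cellDelta_lt hα hcond hW₀ hw₁
  have h₂ := cellDelta_lt hα hcond hW₀ hw₂
  rw [← hi] at h₂
  linarith [abs_sub_lt_cellDelta hα hW₀ hi hm]

end Hash

theorem stmt_6 (α W₀ H₀ bX bY : ℝ) (hα : α ∈ Set.Ioo (0 : ℝ) 1)
    (hcond : (1 - α) / (1 + α) < Real.sqrt α) (hW₀ : 0 < W₀) (hH₀ : 0 < H₀)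
    (w₁ h₁ x₁ y₁ w₂ h₂ x₂ y₂ : ℝ)
    (hw₁ : 0 < w₁) (hh₁ : 0 < h₁) (hw₂ : 0 < w₂) (hh₂ : 0 < h₂)
    (hhash : iouHash α W₀ H₀ bX bY w₁ h₁ x₁ y₁ = iouHash α W₀ H₀ bX bY w₂ h₂ x₂ y₂) :
    0 < interArea w₁ h₁ x₁ y₁ w₂ h₂ x₂ y₂ ∧
      0 < iou w₁ h₁ x₁ y₁ w₂ h₂ x₂ y₂ := by
  simp only [iouHash, Prod.mk.injEq] at hhash
  obtain ⟨hi, hj, hm, hn⟩ := hhash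
  have hI : 0 < interArea w₁ h₁ x₁ y₁ w₂ h₂ x₂ y₂ :=
    interArea_pos hw₁ hh₁ hw₂ hh₂ (abs_sub_lt_half_add_of_idx_eq hα hcond hW₀ hw₁ hw₂ hi hm)
      (abs_sub_lt_half_add_of_idx_eq hα hcond hH₀ hh₁ hh₂ hj hn)
  exact ⟨hI, iou_pos hw₁.le hh₁.le (mul_pos hw₂ hh₂) hI⟩
end
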